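/- Fix μ* > 0 and ε ≥ 0, and let δ_G = f(μ*, ε) with f(μ, ε) = Φ(μ/2 - ε/μ) - e^ε Φ(-μ/2 - ε/μ). Define r(β) = 1 - β + β·δ_G and t(β) = f(μ*, ε + ln β) for β ∈ (0, 1], with t(0) interpreted as the limit 1. Then r(β) ≥ t(β) for all β ∈ [0, 1]. -/

import Mathlib

noncomputable def stdNormalPDF (x : ℝ) : ℝ :=
  (Real.sqrt (2 * Real.pi))⁻¹ * Real.exp (-x ^ 2 / 2)

noncomputable def stdNormalCDF (x : ℝ) : ℝ := ∫ t in Set.Iic x, stdNormalPDF t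

noncomputable def gaussF (μ ε : ℝ) : ℝ :=
  stdNormalCDF (μ / 2 - ε / μ) - Real.exp ε * stdNormalCDF (-μ / 2 - ε / μ)

/-! Write `t β = gaussF μ (ε + log β)`. Since `φ (μ/2 - c/μ) = exp c * φ (-μ/2 - c/μ)`, the density
terms in the derivative of `c ↦ gaussF μ c` cancel, leaving `-exp c * Φ (-μ/2 - c/μ)`; hence
`t' β = -exp ε * Φ (-μ/2 - (ε + log β)/μ)`, which increases with `β`. As `gaussF μ c → 1` when
`c → -∞`, `t` extends continuously by `t 0 = 1` to a convex function on `[0, ∞)`, and on `[0, 1]`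
it lies below its chord `1 - β + β * t 1`. -/

open Real MeasureTheory ProbabilityTheory Set Filter Topology

lemma stdNormalPDF_eq_gaussianPDFReal : stdNormalPDF = gaussianPDFReal 0 1 := by
  ext x
  simp [stdNormalPDF, gaussianPDFReal]

lemma stdNormalCDF_eq_cdf_gaussianReal : stdNormalCDF = cdf (gaussianReal 0 1) := by
  ext x
  rw [cdf_eq_real, measureReal_def, gaussianReal_apply_eq_integral _ one_ne_zero,
    ENNReal.toReal_ofReal (setIntegral_nonneg measurableSet_Iic fun _ _ ↦
      gaussianPDFReal_nonneg _ _ _), stdNormalCDF, stdNormalPDF_eq_gaussianPDFReal]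

lemma hasDerivAt_stdNormalCDF (x : ℝ) : HasDerivAt stdNormalCDF (stdNormalPDF x) x := by
  have hint : Integrable stdNormalPDF :=
    stdNormalPDF_eq_gaussianPDFReal ▸ integrable_gaussianPDFReal 0 1
  have hcont : Continuous stdNormalPDF := by
    unfold stdNormalPDF
    fun_prop
  have hsplit : stdNormalCDF = fun y ↦ stdNormalCDF 0 + ∫ t in (0 : ℝ)..y, stdNormalPDF t := by
    ext y
    rw [← intervalIntegral.integral_Iic_sub_Iic hint.integrableOn hint.integrableOn,
      stdNormalCDF, stdNormalCDF, add_sub_cancel]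
  rw [hsplit]
  exact (intervalIntegral.integral_hasDerivAt_right hint.intervalIntegrable
    hint.aestronglyMeasurable.stronglyMeasurableAtFilter hcont.continuousAt).const_add _

lemma stdNormalPDF_half_sub_div {μ : ℝ} (hμ : μ ≠ 0) (c : ℝ) :
    stdNormalPDF (μ / 2 - c / μ) = exp c * stdNormalPDF (-μ / 2 - c / μ) := by
  rw [stdNormalPDF, stdNormalPDF, mul_left_comm, ← exp_add]
  congr 3
  field_simp
  ring

lemma hasDerivAt_gaussF {μ : ℝ} (hμ : μ ≠ 0) (c : ℝ) :
    HasDerivAt (gaussF μ) (-(exp c * stdNormalCDF (-μ / 2 - c / μ))) c := by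
  have hlin (a : ℝ) : HasDerivAt (fun c ↦ a - c / μ) (-(1 / μ)) c :=
    ((hasDerivAt_id c).div_const μ).const_sub a
  have h := ((hasDerivAt_stdNormalCDF _).comp c (hlin (μ / 2))).fun_sub
    ((hasDerivAt_exp c).fun_mul ((hasDerivAt_stdNormalCDF _).comp c (hlin (-μ / 2))))
  refine h.congr_deriv ?_
  rw [stdNormalPDF_half_sub_div hμ]
  simp only [Function.comp_apply]
  ring

lemma tendsto_gaussF_atBot {μ : ℝ} (hμ : 0 < μ) : Tendsto (gaussF μ) atBot (𝓝 1) := by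
  have hpos : Tendsto (fun c ↦ stdNormalCDF (μ / 2 - c / μ)) atBot (𝓝 1) := by
    rw [stdNormalCDF_eq_cdf_gaussianReal]
    refine (tendsto_cdf_atTop _).comp ((tendsto_atTop_add_const_left _ (μ / 2)
      (tendsto_neg_atBot_atTop.atTop_div_const hμ)).congr fun c ↦ ?_)
    ring
  have hneg : Tendsto (fun c ↦ exp c * stdNormalCDF (-μ / 2 - c / μ)) atBot (𝓝 0) := by
    rw [stdNormalCDF_eq_cdf_gaussianReal]
    refine tendsto_exp_atBot.zero_mul_isBoundedUnder_le ⟨1, ?_⟩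
    simp [abs_of_nonneg (cdf_nonneg _ _), cdf_le_one]
  rw [← sub_zero 1]
  exact hpos.sub hneg

lemma hasDerivAt_gaussF_add_log {μ : ℝ} (hμ : μ ≠ 0) (ε : ℝ) {β : ℝ} (hβ : 0 < β) :
    HasDerivAt (fun β ↦ gaussF μ (ε + log β))
      (-(exp ε * stdNormalCDF (-μ / 2 - (ε + log β) / μ))) β := by
  refine ((hasDerivAt_gaussF hμ _).comp β ((hasDerivAt_log hβ.ne').const_add ε)).congr_deriv ?_
  rw [exp_add, exp_log hβ]
  field_simp

lemma tendsto_gaussF_add_log_nhdsGT_zero {μ : ℝ} (hμ : 0 < μ) (ε : ℝ) :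
    Tendsto (fun β ↦ gaussF μ (ε + log β)) (𝓝[>] 0) (𝓝 1) :=
  (tendsto_gaussF_atBot hμ).comp (tendsto_atBot_add_const_left _ ε tendsto_log_nhdsGT_zero)

lemma convexOn_gaussF_add_log {μ : ℝ} (hμ : 0 < μ) (ε : ℝ) :
    ConvexOn ℝ (Ici 0) (fun β ↦ if β = 0 then 1 else gaussF μ (ε + log β)) := by
  set t := fun β : ℝ ↦ if β = 0 then 1 else gaussF μ (ε + log β)
  have hderiv {β : ℝ} (hβ : 0 < β) :
      HasDerivAt t (-(exp ε * stdNormalCDF (-μ / 2 - (ε + log β) / μ))) β := by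
    refine (hasDerivAt_gaussF_add_log hμ.ne' ε hβ).congr_of_eventuallyEq ?_
    filter_upwards [eventually_ne_nhds hβ.ne'] with x hx
    simp [t, hx]
  have hcont0 : ContinuousWithinAt t (Ici 0) 0 := by
    rw [← continuousWithinAt_Ioi_iff_Ici, ContinuousWithinAt, show t 0 = 1 from if_pos rfl]
    refine (tendsto_gaussF_add_log_nhdsGT_zero hμ ε).congr' ?_
    filter_upwards [self_mem_nhdsWithin] with x hx
    simp [t, (mem_Ioi.1 hx).ne']
  refine MonotoneOn.convexOn_of_deriv (convex_Ici 0) ?_ ?_ ?_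
  · intro β hβ
    rcases (mem_Ici.1 hβ).eq_or_lt with rfl | hβ
    · exact hcont0
    · exact (hderiv hβ).continuousAt.continuousWithinAt
  · rw [interior_Ici]
    exact fun β hβ ↦ (hderiv hβ).differentiableAt.differentiableWithinAt
  · rw [interior_Ici]
    intro x hx y hy hxy
    rw [(hderiv hx).deriv, (hderiv hy).deriv, neg_le_neg_iff]
    gcongr
    rw [stdNormalCDF_eq_cdf_gaussianReal]
    refine monotone_cdf _ ?_
    gcongr

theorem gaussF_le_affine_general (μs ε : ℝ) (hμ : 0 < μs) :
    ∀ β ∈ Set.Icc (0 : ℝ) 1,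
      (if β = 0 then 1 else gaussF μs (ε + Real.log β))
        ≤ 1 - β + β * gaussF μs ε := by
  intro β ⟨hβ0, hβ1⟩
  have hchord := (convexOn_gaussF_add_log hμ ε).2 self_mem_Ici (mem_Ici.2 zero_le_one)
    (sub_nonneg.2 hβ1) hβ0 (sub_add_cancel 1 β)
  simpa using hchord

theorem gaussF_le_affine (μs ε : ℝ) (hμ : 0 < μs) (hε : 0 ≤ ε) :
    ∀ β ∈ Set.Icc (0 : ℝ) 1,
      (if β = 0 then 1 else gaussF μs (ε + Real.log β))
        ≤ 1 - β + β * gaussF μs ε :=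
  gaussF_le_affine_general μs ε hμ
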